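/- Let n ≥ 2 and k ≥ 1 be integers, let x ∈ ℕ^{n×n} be a symmetric matrix with x_{ij} ≤ log n for all i, j ∈ [n], and let z ∈ {1,…,k}^n. Then Γ(1/2)^{k(k+1)/2} · ∏_{1 ≤ a ≤ b ≤ k} [ ( o_{ab}(x,z) / n_{ab}(z) )^{o_{ab}(x,z)} · e^{−o_{ab}(x,z)} · ( n_{ab}(z) + 1 )^{o_{ab}(x,z) + 1/2} / Γ( o_{ab}(x,z) + 1/2 ) ] ≤ (n+1)^{k(k+1)}. -/

import Mathlib

open Finset

/-- `n_a(z)`: number of vertices in community `a`. -/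
def nCount {n k : ℕ} (z : Fin n → Fin k) (a : Fin k) : ℕ :=
  (Finset.univ.filter fun i => z i = a).card

/-- `n_{ab}(z)`: number of pairs of nodes in communities `a` and `b`
(`n_a n_b` for `a ≠ b`, `n_a² / 2` for `a = b`). -/
noncomputable def nPair {n k : ℕ} (z : Fin n → Fin k) (a b : Fin k) : ℝ :=
  if a = b then (nCount z a : ℝ) ^ 2 / 2 else (nCount z a : ℝ) * (nCount z b : ℝ)

/-- `o_{ab}(x,z)`: number of edges between communities `a` and `b`
(halved when `a = b`). -/
noncomputable def oCount {n k : ℕ} (x : Fin n → Fin n → ℕ) (z : Fin n → Fin k)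
    (a b : Fin k) : ℝ :=
  if a = b then (∑ i, ∑ j, if z i = a ∧ z j = a then (x i j : ℝ) else 0) / 2
  else ∑ i, ∑ j, if z i = a ∧ z j = b then (x i j : ℝ) else 0

/-!
Multiplied by `Γ(1/2) = √π`, each of the `k(k+1)/2` factors is at most `(n+1)²`. The entries
`o = o_{ab}` are half-integers, and on those `Γ(o + 1/2) ≥ √π o^o e^{-o}`: by induction along
`Γ(s + 1) = s Γ(s)`, the step being `(u+1)^{u+1} e^{-1} ≤ (u + 1/2) u^u`, which is the
Hermite–Hadamard inequality for `log` on `[u, u+1]`. With `N = n_{ab}` the factor is then at most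
`((N+1)/N)^o √(N+1) ≤ e^{o/N} (n+1)`, and `o ≤ N log n` because every entry of `x` is at most
`log n`.
-/

open Real Set

theorem rpow_self_eq_exp_mul_log {x : ℝ} (hx : 0 ≤ x) : x ^ x = exp (x * log x) := by
  rcases hx.eq_or_lt with rfl | hx
  · simp
  · rw [rpow_def_of_pos hx, mul_comm]

/-- Hermite–Hadamard for the concave `log` on `[c - h, c + h]`: the left side is the integral
of `1 + log` over that interval. -/
theorem mul_log_add_sub_mul_log_sub_le {c h : ℝ} (hh : 0 ≤ h) (hc : h ≤ c) :
    (c + h) * log (c + h) - (c - h) * log (c - h) ≤ 2 * h * (1 + log c) := by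
  set F : ℝ → ℝ := fun t ↦ (c + t) * log (c + t) - (c - t) * log (c - t) - 2 * t * (1 + log c)
  have hderiv : ∀ t ∈ Ioo 0 c,
      HasDerivAt F (log (c + t) + 1 + (log (c - t) + 1) - 2 * (1 + log c)) t := by
    intro t ⟨ht0, htc⟩
    have hplus := (hasDerivAt_mul_log (by linarith : c + t ≠ 0)).comp t
      ((hasDerivAt_id t).const_add c)
    have hminus := (hasDerivAt_mul_log (by linarith : c - t ≠ 0)).comp t
      ((hasDerivAt_id t).const_sub c)
    have hlin := ((hasDerivAt_id t).const_mul 2).mul_const (1 + log c)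
    exact ((hplus.sub hminus).sub hlin).congr_deriv (by ring)
  have hanti : AntitoneOn F (Icc 0 c) := by
    refine antitoneOn_of_hasDerivWithinAt_nonpos (convex_Icc 0 c) ?_
      (fun t ht ↦ (hderiv t (by simpa using ht)).hasDerivWithinAt) fun t ht ↦ ?_
    · exact ((continuous_mul_log.comp (continuous_const.add continuous_id)).sub
        (continuous_mul_log.comp (continuous_const.sub continuous_id)) |>.sub
        (by fun_prop)).continuousOn
    · rw [interior_Icc] at ht
      obtain ⟨ht0, htc⟩ := ht
      have hc0 : 0 < c := ht0.trans htc
      have : log (c + t) + log (c - t) ≤ 2 * log c := by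
        rw [← log_mul (by linarith) (by linarith), two_mul, ← log_mul hc0.ne' hc0.ne']
        exact log_le_log (by nlinarith) (by nlinarith)
      linarith
  simpa [F] using hanti ⟨le_rfl, hh.trans hc⟩ ⟨hh, hc⟩ hh

theorem rpow_self_add_one_mul_exp_le {u : ℝ} (hu : 0 ≤ u) :
    (u + 1) ^ (u + 1) * exp (-(u + 1)) ≤ (u + 1 / 2) * (u ^ u * exp (-u)) := by
  have key := mul_log_add_sub_mul_log_sub_le (c := u + 1 / 2) (h := 1 / 2) (by norm_num)
    (by linarith)
  rw [show u + 1 / 2 + 1 / 2 = u + 1 by ring, show u + 1 / 2 - 1 / 2 = u by ring] at key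
  have hc : 0 < u + 1 / 2 := by linarith
  rw [rpow_self_eq_exp_mul_log (by linarith), rpow_self_eq_exp_mul_log hu, ← exp_add,
    ← exp_log hc, ← exp_add, ← exp_add, exp_le_exp]
  linarith

theorem sqrt_pi_mul_rpow_self_mul_exp_le_Gamma : ∀ m : ℕ,
    √π * (((m : ℝ) / 2) ^ ((m : ℝ) / 2) * exp (-((m : ℝ) / 2))) ≤ Gamma ((m : ℝ) / 2 + 1 / 2)
  | 0 => by simp [-one_div, Gamma_one_half_eq]
  | 1 => by
    have hπe : √π * √(1 / 2) ≤ exp (1 / 2) := by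
      rw [← sqrt_mul pi_pos.le, exp_half]
      exact sqrt_le_sqrt (by linarith [pi_lt_four, exp_one_gt_d9])
    rw [Nat.cast_one, show (1 : ℝ) / 2 + 1 / 2 = 1 by norm_num, Gamma_one, ← sqrt_eq_rpow,
      ← mul_assoc]
    calc √π * √(1 / 2) * exp (-(1 / 2)) ≤ exp (1 / 2) * exp (-(1 / 2)) := by gcongr
      _ = 1 := by rw [← exp_add, add_neg_cancel, exp_zero]
  | m + 2 => by
    set u : ℝ := (m : ℝ) / 2
    have hu : 0 ≤ u := by positivity
    have hcast : ((m + 2 : ℕ) : ℝ) / 2 = u + 1 := by push_cast; ring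
    rw [hcast, show u + 1 + 1 / 2 = (u + 1 / 2) + 1 by ring, Gamma_add_one (by positivity)]
    calc √π * ((u + 1) ^ (u + 1) * exp (-(u + 1)))
        ≤ √π * ((u + 1 / 2) * (u ^ u * exp (-u))) := by
          gcongr ?_ * ?_; exact rpow_self_add_one_mul_exp_le hu
      _ = (u + 1 / 2) * (√π * (u ^ u * exp (-u))) := by ring
      _ ≤ (u + 1 / 2) * Gamma (u + 1 / 2) := by
          gcongr; exact sqrt_pi_mul_rpow_self_mul_exp_le_Gamma m

/-- The `(a, b)` factor of the product in `ratio_A_bound`, with `o = o_{ab}` and `N = n_{ab}`. -/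
noncomputable def pairFactor (o N : ℝ) : ℝ :=
  (o / N) ^ o * exp (-o) * (N + 1) ^ (o + 1 / 2) / Gamma (o + 1 / 2)

theorem pairFactor_nonneg {o N : ℝ} (ho : 0 ≤ o) (hN : 0 ≤ N) : 0 ≤ pairFactor o N := by
  unfold pairFactor
  have := Gamma_pos_of_pos (by linarith : 0 < o + 1 / 2)
  positivity

theorem add_one_div_rpow_le_exp {o N ℓ : ℝ} (ho : 0 ≤ o) (hN : 0 < N) (hoN : o ≤ N * ℓ) :
    ((N + 1) / N) ^ o ≤ exp ℓ :=
  calc ((N + 1) / N) ^ o ≤ exp (1 / N) ^ o := by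
        gcongr
        rw [add_div, div_self hN.ne', add_comm]
        exact add_one_le_exp _
    _ = exp (o / N) := by rw [← exp_mul, one_div_mul_eq_div]
    _ ≤ exp ℓ := exp_le_exp.mpr ((div_le_iff₀' hN).mpr hoN)

theorem Gamma_one_half_mul_pairFactor_le (m : ℕ) {N ℓ : ℝ} (hN : 0 ≤ N) (hℓ : 0 ≤ ℓ)
    (hmN : (m : ℝ) / 2 ≤ N * ℓ) :
    Gamma (1 / 2) * pairFactor ((m : ℝ) / 2) N ≤ exp ℓ * √(N + 1) := by
  rcases m.eq_zero_or_pos with rfl | hm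
  · have := Gamma_pos_of_pos (by norm_num : (0 : ℝ) < 1 / 2)
    simp only [pairFactor, CharP.cast_eq_zero, zero_div, rpow_zero, neg_zero, exp_zero, zero_add,
      ← sqrt_eq_rpow]
    field_simp
    exact one_le_exp hℓ
  set o : ℝ := (m : ℝ) / 2
  have ho : 0 < o := by positivity
  have hNpos : 0 < N := hN.lt_of_ne fun h ↦ by rw [← h, zero_mul] at hmN; linarith
  have hlower : 0 < √π * (o ^ o * exp (-o)) := by have := pi_pos; positivity
  calc Gamma (1 / 2) * pairFactor o N
      ≤ √π * ((o / N) ^ o * exp (-o) * (N + 1) ^ (o + 1 / 2) / (√π * (o ^ o * exp (-o)))) := by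
        rw [Gamma_one_half_eq, pairFactor]
        gcongr
        exact sqrt_pi_mul_rpow_self_mul_exp_le_Gamma m
    _ = ((N + 1) / N) ^ o * √(N + 1) := by
        rw [div_rpow ho.le hN, div_rpow (by linarith) hN, rpow_add (by linarith), ← sqrt_eq_rpow]
        have := pi_pos
        field_simp
    _ ≤ exp ℓ * √(N + 1) := by gcongr; exact add_one_div_rpow_le_exp ho.le hNpos hmN

theorem sum_card_filter_le_eq (k : ℕ) :
    ∑ a : Fin k, #{b | a ≤ b} = k * (k + 1) / 2 := by
  have hcard (a : Fin k) : #{b | a ≤ b} = k - a := by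
    rw [← Fin.card_Ici]; congr 1; ext; simp
  simp only [hcard]
  rw [Fin.sum_univ_eq_sum_range (fun i ↦ k - i), ← sum_range_reflect,
    sum_congr rfl fun j hj ↦ show k - (k - 1 - j) = j + 1 by grind,
    show ∑ j ∈ range k, (j + 1) = ∑ j ∈ range (k + 1), j by simp [sum_range_succ'],
    sum_range_id, Nat.add_sub_cancel, mul_comm]

theorem pow_mul_prod_prod_le {k : ℕ} {c B : ℝ} {f : Fin k → Fin k → ℝ}
    (hf₀ : ∀ a b, 0 ≤ c * f a b) (hf : ∀ a b, c * f a b ≤ B) :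
    c ^ (k * (k + 1) / 2) * ∏ a, ∏ b ∈ {b | a ≤ b}, f a b ≤ B ^ (k * (k + 1) / 2) := by
  have hconst (d : ℝ) : ∏ a : Fin k, ∏ b ∈ {b | a ≤ b}, d = d ^ (k * (k + 1) / 2) := by
    simp only [prod_const, prod_pow_eq_pow_sum, sum_card_filter_le_eq]
  rw [← hconst, ← hconst, ← prod_mul_distrib]
  simp only [← prod_mul_distrib]
  exact prod_le_prod (fun a _ ↦ prod_nonneg fun b _ ↦ hf₀ a b)
    fun a _ ↦ prod_le_prod (fun b _ ↦ hf₀ a b) fun b _ ↦ hf a b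

section Blocks

variable {n k : ℕ} (x : Fin n → Fin n → ℕ) (z : Fin n → Fin k) (a b : Fin k)

theorem sum_sum_ite_le {w : Fin n → Fin n → ℝ} {L : ℝ} (hw : ∀ i j, w i j ≤ L) :
    (∑ i, ∑ j, if z i = a ∧ z j = b then w i j else 0) ≤ nCount z a * nCount z b * L :=
  calc (∑ i, ∑ j, if z i = a ∧ z j = b then w i j else 0)
      = ∑ i with z i = a, ∑ j with z j = b, w i j := by
        simp only [sum_filter, ite_and, ite_sum_zero]
    _ ≤ ∑ i with z i = a, ∑ j with z j = b, L := by gcongr with i _ j; exact hw i j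
    _ = nCount z a * nCount z b * L := by simp [nCount, mul_assoc]

theorem exists_oCount_eq_half : ∃ m : ℕ, oCount x z a b = m / 2 := by
  unfold oCount
  split_ifs
  · exact ⟨∑ i, ∑ j, if z i = a ∧ z j = a then x i j else 0, by push_cast; rfl⟩
  · exact ⟨2 * ∑ i, ∑ j, if z i = a ∧ z j = b then x i j else 0, by push_cast; ring⟩

theorem oCount_nonneg : 0 ≤ oCount x z a b := by
  obtain ⟨m, hm⟩ := exists_oCount_eq_half x z a b
  rw [hm]
  positivity

theorem nPair_nonneg : 0 ≤ nPair z a b := by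
  unfold nPair; split_ifs <;> positivity

theorem nPair_le_sq : nPair z a b ≤ (n : ℝ) ^ 2 := by
  have hle (d : Fin k) : (nCount z d : ℝ) ≤ n := by
    exact_mod_cast (card_filter_le _ _).trans_eq (card_fin n)
  have h₀ (d : Fin k) : (0 : ℝ) ≤ nCount z d := Nat.cast_nonneg _
  unfold nPair
  split_ifs
  · nlinarith [hle a, h₀ a]
  · nlinarith [hle a, hle b, h₀ a, h₀ b]

theorem oCount_le_nPair_mul {L : ℝ} (hx : ∀ i j, (x i j : ℝ) ≤ L) :
    oCount x z a b ≤ nPair z a b * L := by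
  have := sum_sum_ite_le z a b hx
  unfold oCount nPair
  split_ifs with hab
  · subst hab; linarith
  · exact this

end Blocks

theorem Gamma_one_half_mul_pairFactor_oCount_le {n k : ℕ} (hn : 0 < n)
    {x : Fin n → Fin n → ℕ} (hx : ∀ i j, (x i j : ℝ) ≤ log n) (z : Fin n → Fin k) (a b : Fin k) :
    Gamma (1 / 2) * pairFactor (oCount x z a b) (nPair z a b) ≤ ((n : ℝ) + 1) ^ 2 := by
  obtain ⟨m, hm⟩ := exists_oCount_eq_half x z a b
  have hN := nPair_nonneg z a b
  have hsqrt : √(nPair z a b + 1) ≤ n + 1 :=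
    sqrt_le_iff.mpr ⟨by positivity, by nlinarith [nPair_le_sq z a b, (n.cast_nonneg : (0 : ℝ) ≤ n)]⟩
  calc Gamma (1 / 2) * pairFactor (oCount x z a b) (nPair z a b)
      ≤ exp (log n) * √(nPair z a b + 1) := by
        rw [hm]
        exact Gamma_one_half_mul_pairFactor_le m hN (log_natCast_nonneg n)
          (hm ▸ oCount_le_nPair_mul x z a b hx)
    _ ≤ (n + 1) * (n + 1) := by
        rw [exp_log (by exact_mod_cast hn)]
        gcongr
        linarith
    _ = ((n : ℝ) + 1) ^ 2 := (sq _).symm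

theorem ratio_A_bound_general (n k : ℕ) (hn : 2 ≤ n)
    (x : Fin n → Fin n → ℕ)
    (hx : ∀ i j, (x i j : ℝ) ≤ Real.log n) (z : Fin n → Fin k) :
    Real.Gamma (1 / 2) ^ (k * (k + 1) / 2) *
        ∏ a : Fin k, ∏ b ∈ Finset.univ.filter (fun b => a ≤ b),
          (oCount x z a b / nPair z a b) ^ (oCount x z a b) *
            Real.exp (-(oCount x z a b)) *
            (nPair z a b + 1) ^ (oCount x z a b + 1 / 2) /
            Real.Gamma (oCount x z a b + 1 / 2) ≤
      ((n : ℝ) + 1) ^ (k * (k + 1)) := by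
  have hΓ : 0 < Gamma (1 / 2) := Gamma_pos_of_pos one_half_pos
  have hpair := Gamma_one_half_mul_pairFactor_oCount_le (by omega) hx z
  calc _ ≤ (((n : ℝ) + 1) ^ 2) ^ (k * (k + 1) / 2) :=
        pow_mul_prod_prod_le (fun a b ↦ mul_nonneg hΓ.le <| pairFactor_nonneg
          (oCount_nonneg x z a b) (nPair_nonneg z a b)) hpair
    _ = ((n : ℝ) + 1) ^ (k * (k + 1)) := by
        rw [← pow_mul, Nat.mul_div_cancel' (Nat.even_mul_succ_self k).two_dvd]

/-- bound on the ratio `Â(x,z)/A(x,z)` for good networks. -/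
theorem ratio_A_bound (n k : ℕ) (hn : 2 ≤ n) (hk : 1 ≤ k)
    (x : Fin n → Fin n → ℕ) (hsym : ∀ i j, x i j = x j i)
    (hx : ∀ i j, (x i j : ℝ) ≤ Real.log n) (z : Fin n → Fin k) :
    Real.Gamma (1 / 2) ^ (k * (k + 1) / 2) *
        ∏ a : Fin k, ∏ b ∈ Finset.univ.filter (fun b => a ≤ b),
          (oCount x z a b / nPair z a b) ^ (oCount x z a b) *
            Real.exp (-(oCount x z a b)) *
            (nPair z a b + 1) ^ (oCount x z a b + 1 / 2) /
            Real.Gamma (oCount x z a b + 1 / 2) ≤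
      ((n : ℝ) + 1) ^ (k * (k + 1)) :=
  ratio_A_bound_general n k hn x hx z
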